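/- Let Γ be the presented group with generators g, h, f and relations h g h⁻¹ = g⁻¹, h f h⁻¹ = f⁻¹, and g f = f g. Let k, l, m be integers with k ≠ 0 or m ≠ 0. Then the centralizer in Γ of the element g^k · h^{2l} · f^m equals the subgroup of Γ generated by the set {g, h², f}. -/

import Mathlib

/-- The relator set of the presented group
`Γ = ⟨g, h, f | h g h⁻¹ = g⁻¹, h f h⁻¹ = f⁻¹, g f = f g⟩`,
the fundamental group of the spherical tangent bundle of the Klein bottle.
Generator `0` is `g`, generator `1` is `h`, generator `2` is `f`. -/
def kleinSTRels : Set (FreeGroup (Fin 3)) :=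
  { FreeGroup.of 1 * FreeGroup.of 0 * (FreeGroup.of 1)⁻¹ * FreeGroup.of 0,
    FreeGroup.of 1 * FreeGroup.of 2 * (FreeGroup.of 1)⁻¹ * FreeGroup.of 2,
    FreeGroup.of 0 * FreeGroup.of 2 * (FreeGroup.of 0)⁻¹ * (FreeGroup.of 2)⁻¹ }

/-- The presented group `⟨g, h, f | h g h⁻¹ = g⁻¹, h f h⁻¹ = f⁻¹, g f = f g⟩`. -/
abbrev KleinST : Type := PresentedGroup kleinSTRels

def KleinST.g : KleinST := PresentedGroup.of 0
def KleinST.h : KleinST := PresentedGroup.of 1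
def KleinST.f : KleinST := PresentedGroup.of 2

/-! The subgroup `N = ⟨g, h², f⟩` is abelian, normalized by `h`, and contains `h²`, so every
element of `Γ` lies in `N` or in `hN`. Hence `N` centralizes the word `w = g^k h^(2l) f^m ∈ N`,
and an element of `hN` centralizes `w` only if `h` does. Sending `g ↦ r a`, `h ↦ s`, `f ↦ r b`
into the infinite dihedral group maps `w` to the rotation `r (a k + b m)`, which commutes with
the reflection `s` only if `a k + b m = 0`; as `a` and `b` are arbitrary, `k = m = 0`. -/

namespace Subgroup

variable {G : Type*} [Group G]

theorem mem_normalizer_closure_of_conj_mem_of_sq_mem {s : Set G} {a : G}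
    (hconj : ∀ x ∈ s, a * x * a⁻¹ ∈ closure s) (hsq : a ^ 2 ∈ closure s) :
    a ∈ normalizer (closure s) := by
  have hle : closure s ≤ (closure s).comap (MulAut.conj a).toMonoidHom :=
    (closure_le _).mpr hconj
  refine mem_normalizer_iff.mpr fun n => ⟨fun hn => hle hn, fun hn => ?_⟩
  have hn' : n = (a ^ 2)⁻¹ * (a * (a * n * a⁻¹) * a⁻¹) * a ^ 2 := by group
  rw [hn']
  exact mul_mem (mul_mem (inv_mem hsq) (hle hn)) hsq

theorem mem_or_inv_mul_mem_of_zpowers_sup_eq_top {N : Subgroup G} {a : G}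
    (hnorm : a ∈ normalizer (N : Set G)) (hsq : a ^ 2 ∈ N) (hsup : zpowers a ⊔ N = ⊤)
    (x : G) :
    x ∈ N ∨ a⁻¹ * x ∈ N := by
  have hx : x ∈ (↑(zpowers a ⊔ N) : Set G) := by rw [hsup]; trivial
  rw [coe_mul_of_left_le_normalizer_right _ _ (zpowers_le.mpr hnorm)] at hx
  obtain ⟨_, ⟨j, rfl⟩, n, hn, rfl⟩ := hx
  obtain ⟨q, rfl | rfl⟩ := Int.even_or_odd' j
  · left
    simpa only [zpow_mul, zpow_ofNat] using mul_mem (zpow_mem hsq q) hn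
  · right
    have hx : a⁻¹ * (a ^ (2 * q + 1) * n) = (a ^ 2) ^ q * n := by
      rw [zpow_add_one, zpow_mul, zpow_ofNat]; group
    exact hx ▸ mul_mem (zpow_mem hsq q) hn

end Subgroup

theorem commute_sq_of_conj_eq_inv {G : Type*} [Group G] {a x : G} (hax : a * x * a⁻¹ = x⁻¹) :
    Commute (a ^ 2) x := by
  have hax' : a * x⁻¹ * a⁻¹ = x := by
    rw [show a * x⁻¹ * a⁻¹ = (a * x * a⁻¹)⁻¹ by group, hax, inv_inv]
  calc a ^ 2 * x = a * (a * x * a⁻¹) * a⁻¹ * a ^ 2 := by simp only [pow_two]; group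
    _ = x * a ^ 2 := by rw [hax, hax']

theorem DihedralGroup.commute_sr_r_iff {n : ℕ} (i j : ZMod n) :
    Commute (sr i) (r j) ↔ j = -j := by
  rw [Commute, SemiconjBy, sr_mul_r, r_mul_sr, sr.injEq]
  constructor <;> intro hj <;> linear_combination hj

namespace KleinST

open Subgroup DihedralGroup

theorem h_mul_g_mul_h_inv : h * g * h⁻¹ = g⁻¹ :=
  mul_eq_one_iff_eq_inv.mp <| PresentedGroup.one_of_mem (rels := kleinSTRels) (Set.mem_insert _ _)

theorem h_mul_f_mul_h_inv : h * f * h⁻¹ = f⁻¹ :=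
  mul_eq_one_iff_eq_inv.mp <|
    PresentedGroup.one_of_mem (rels := kleinSTRels) (Set.mem_insert_of_mem _ (Set.mem_insert _ _))

theorem commute_g_f : Commute g f :=
  commutatorElement_eq_one_iff_commute.mp <| PresentedGroup.one_of_mem (rels := kleinSTRels)
    (Set.mem_insert_of_mem _ (Set.mem_insert_of_mem _ rfl))

theorem commute_h_sq_g : Commute (h ^ 2) g := commute_sq_of_conj_eq_inv h_mul_g_mul_h_inv

theorem commute_h_sq_f : Commute (h ^ 2) f := commute_sq_of_conj_eq_inv h_mul_f_mul_h_inv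

theorem isMulCommutative_closure_g_h_sq_f : IsMulCommutative (closure {g, h ^ 2, f}) := by
  refine isMulCommutative_closure ?_
  simp only [Set.mem_insert_iff, Set.mem_singleton_iff]
  rintro x (rfl | rfl | rfl) y (rfl | rfl | rfl)
  all_goals first
    | rfl
    | exact commute_g_f.eq | exact commute_g_f.symm.eq
    | exact commute_h_sq_g.eq | exact commute_h_sq_g.symm.eq
    | exact commute_h_sq_f.eq | exact commute_h_sq_f.symm.eq

theorem closure_g_h_sq_f_le_centralizer (k l m : ℤ) :
    closure {g, h ^ 2, f} ≤ centralizer {g ^ k * h ^ (2 * l) * f ^ m} := by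
  have := isMulCommutative_closure_g_h_sq_f
  refine (le_centralizer _).trans (centralizer_le (Set.singleton_subset_iff.mpr ?_))
  rw [zpow_mul, zpow_ofNat]
  exact mul_mem (mul_mem (zpow_mem (subset_closure (by simp)) k)
    (zpow_mem (subset_closure (by simp)) l)) (zpow_mem (subset_closure (by simp)) m)

theorem h_mem_normalizer : h ∈ normalizer (closure {g, h ^ 2, f} : Set KleinST) := by
  refine mem_normalizer_closure_of_conj_mem_of_sq_mem ?_ (subset_closure (by simp))
  simp only [Set.mem_insert_iff, Set.mem_singleton_iff]
  rintro x (rfl | rfl | rfl)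
  · rw [h_mul_g_mul_h_inv]; exact inv_mem (subset_closure (by simp))
  · rw [mul_inv_eq_of_eq_mul ((Commute.self_pow h 2).eq)]; exact subset_closure (by simp)
  · rw [h_mul_f_mul_h_inv]; exact inv_mem (subset_closure (by simp))

theorem zpowers_h_sup_eq_top : zpowers h ⊔ closure {g, h ^ 2, f} = ⊤ := by
  rw [eq_top_iff, ← PresentedGroup.closure_range_of, closure_le, Set.range_subset_iff]
  intro i
  fin_cases i
  · exact mem_sup_right (subset_closure (by simp [g]))
  · exact mem_sup_left (mem_zpowers h)
  · exact mem_sup_right (subset_closure (by simp [f]))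

def toDihedral (a b : ZMod 0) : KleinST →* DihedralGroup 0 :=
  PresentedGroup.toGroup (f := ![r a, sr 0, r b]) <| by
    rintro _ (rfl | rfl | rfl) <;> simp [sr_mul_r, sr_mul_sr, r_mul_r, inv_r]

-- `(k : ZMod 0)` would not insert the cast, since `ZMod 0` unfolds to `ℤ`.
theorem toDihedral_apply (a b : ZMod 0) (k l m : ℤ) :
    toDihedral a b (g ^ k * h ^ (2 * l) * f ^ m) = r (a * Int.cast k + b * Int.cast m) := by
  simp only [toDihedral, map_mul, map_zpow, g, h, f, PresentedGroup.toGroup.of]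
  simp [r_zpow, zpow_mul, sq, r_mul_r]

theorem h_notMem_centralizer {k l m : ℤ} (hkm : k ≠ 0 ∨ m ≠ 0) :
    h ∉ centralizer {g ^ k * h ^ (2 * l) * f ^ m} := by
  intro hc
  have key (a b : ZMod 0) : a * Int.cast k + b * Int.cast m = 0 := by
    have hcomm : Commute h (g ^ k * h ^ (2 * l) * f ^ m) := mem_centralizer_singleton_iff.mp hc
    exact self_eq_neg.mp <|
      (commute_sr_r_iff _ _).mp (toDihedral_apply a b k l m ▸ hcomm.map (toDihedral a b))
  have hk : k = 0 := by simpa using key 1 0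
  have hm : m = 0 := by simpa using key 0 1
  exact hkm.elim (· hk) (· hm)

end KleinST

/-- In `Γ = ⟨g, h, f | h g h⁻¹ = g⁻¹, h f h⁻¹ = f⁻¹, g f = f g⟩`, for integers `k, l, m`
with `k ≠ 0` or `m ≠ 0`, the centralizer of `g ^ k * h ^ (2l) * f ^ m` is the subgroup
generated by `{g, h ^ 2, f}`. -/
theorem kleinST_centralizer_orientation_preserving (k l m : ℤ) (hkm : k ≠ 0 ∨ m ≠ 0) :
    Subgroup.centralizer {KleinST.g ^ k * KleinST.h ^ (2 * l) * KleinST.f ^ m} =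
      Subgroup.closure {KleinST.g, KleinST.h ^ 2, KleinST.f} := by
  open KleinST Subgroup in
  refine le_antisymm (fun x hx => ?_) (closure_g_h_sq_f_le_centralizer k l m)
  refine (mem_or_inv_mul_mem_of_zpowers_sup_eq_top h_mem_normalizer (subset_closure (by simp))
    zpowers_h_sup_eq_top x).resolve_right fun hx' => h_notMem_centralizer (l := l) hkm ?_
  -- `h = x * (h⁻¹ * x)⁻¹`, and both factors centralize the word
  simpa using mul_mem hx (inv_mem (closure_g_h_sq_f_le_centralizer k l m hx'))
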